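/- arXiv:1111.4201 — 2 statements merged into one kernel-verified Lean document; each statement's English description precedes it below -/
import Mathlib

section
/- Let Γ be a finite group, R a braided Hopf algebra in ^Γ_Γ𝒴𝒟, A = R#kΓ, and 𝒟 ⊆ A^e the subalgebra generated by the elements (r#g)⊗(s#g⁻¹) with r,s ∈ R, g ∈ Γ. Then 𝒟 is a left A-submodule of L(A^e) (A^e with left A-action via ρ(a) = a₁⊗S_A(a₂)) and a right A-submodule of R(A^e) (A^e with right A-action via ρ). -/
/-!
For `r ∈ R` with `Δ_R(r) = r¹ ⊗ r²` we have `ρ(r # h) = Σ_g (r¹ # gh) ⊗ S_A((r²)_g # h)`, and the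
antipode of the biproduct maps `R_g # h` into `R # (gh)⁻¹`; so every summand is a generator of `𝒟`
and `ρ(A) ⊆ 𝒟`. Since `𝒟` is a subalgebra, it is then stable under multiplication by `ρ(A)` on
either side. The formula for `S_A` is proved by checking that it is a right convolution inverse
of the identity, which determines the antipode.
-/
open scoped TensorProduct
open TensorProduct

noncomputable section

/-- `IsRepr k x a b` says that `∑ i, a i ⊗ b i` is a representation of the element `x`
of a tensor product as a finite sum of pure tensors. -/
def IsRepr (k : Type) [CommRing k] {M N : Type} [AddCommGroup M] [Module k M]
    [AddCommGroup N] [Module k N] (x : M ⊗[k] N) {n : ℕ}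
    (a : Fin n → M) (b : Fin n → N) : Prop :=
  x = ∑ i, a i ⊗ₜ[k] b i

end
open scoped TensorProduct
open TensorProduct

noncomputable section

variable (k Γ R : Type) [Field k] [Group Γ] [Fintype Γ] [DecidableEq Γ]
  [Ring R] [Algebra k R]

/-- A braided Hopf algebra `R` in the Yetter-Drinfeld category `{}^Γ_Γ\mathcal{YD}` over
the group algebra of a finite group `Γ`: a `Γ`-graded algebra (`proj g` is the projection
onto the homogeneous component `R_g`) carrying a `Γ`-action by algebra automorphisms with
`h ⋅ R_g = R_{hgh⁻¹}`, together with a comultiplication, counit and antipode making it a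
braided Hopf algebra, the braiding being `c(x ⊗ y) = (g ⋅ y) ⊗ x` for `x ∈ R_g`. -/
structure GammaBraidedHopf : Type where
  /-- the `Γ`-action by algebra automorphisms -/
  act : Γ →* (R ≃ₐ[k] R)
  /-- the projection onto the degree `g` homogeneous component -/
  proj : Γ → (R →ₗ[k] R)
  proj_sum : ∀ r : R, ∑ g : Γ, proj g r = r
  proj_proj : ∀ (g h : Γ) (r : R), proj g (proj h r) = if g = h then proj h r else 0
  /-- the grading is an algebra grading: `R_g R_h ⊆ R_{gh}` -/
  proj_mul : ∀ (g h : Γ) (r s : R), proj g r = r → proj h s = s →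
    proj (g * h) (r * s) = r * s
  proj_one_one : proj 1 1 = 1
  /-- compatibility of action and grading: `h ⋅ R_g = R_{hgh⁻¹}` -/
  act_proj : ∀ (h g : Γ) (r : R), proj g r = r →
    proj (h * g * h⁻¹) (act h r) = act h r
  /-- the comultiplication of `R` -/
  comulR : R →ₗ[k] R ⊗[k] R
  /-- the counit of `R` -/
  counitR : R →ₗ[k] k
  comulR_coassoc : ∀ (r : R) {n : ℕ} (r1 r2 : Fin n → R), IsRepr k (comulR r) r1 r2 →
      ∑ i, (TensorProduct.assoc k R R R) (comulR (r1 i) ⊗ₜ[k] r2 i)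
        = ∑ i, r1 i ⊗ₜ[k] comulR (r2 i)
  comulR_counit_left : ∀ (r : R) {n : ℕ} (r1 r2 : Fin n → R), IsRepr k (comulR r) r1 r2 →
      ∑ i, counitR (r1 i) • r2 i = r
  comulR_counit_right : ∀ (r : R) {n : ℕ} (r1 r2 : Fin n → R), IsRepr k (comulR r) r1 r2 →
      ∑ i, counitR (r2 i) • r1 i = r
  /-- `Δ_R` is an algebra map for the braided multiplication on `R ⊗ R`:
  `Δ_R(rs) = Σ_g (r¹ (g ⋅ s¹)) ⊗ ((r²)_g s²)` -/
  comulR_braided_mul : ∀ (r s : R) {n : ℕ} (r1 r2 : Fin n → R) {m : ℕ}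
      (s1 s2 : Fin m → R),
    IsRepr k (comulR r) r1 r2 → IsRepr k (comulR s) s1 s2 →
      comulR (r * s) = ∑ i, ∑ i', ∑ g : Γ,
        (r1 i * act g (s1 i')) ⊗ₜ[k] (proj g (r2 i) * s2 i')
  comulR_one : comulR 1 = 1 ⊗ₜ[k] 1
  counitR_mul : ∀ r s : R, counitR (r * s) = counitR r * counitR s
  counitR_one : counitR 1 = 1
  /-- the comultiplication is `Γ`-equivariant -/
  comulR_equivariant : ∀ (h : Γ) (r : R),
    comulR (act h r)
      = TensorProduct.map (act h).toLinearMap (act h).toLinearMap (comulR r)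
  counitR_equivariant : ∀ (h : Γ) (r : R), counitR (act h r) = counitR r
  /-- the comultiplication is graded: `Δ_R(R_g) ⊆ ⊕_{st = g} R_s ⊗ R_t` -/
  comulR_graded : ∀ (g : Γ) (r : R), proj g r = r → ∀ s t : Γ, s * t ≠ g →
    TensorProduct.map (proj s) (proj t) (comulR r) = 0
  counitR_graded : ∀ (g : Γ) (r : R), g ≠ 1 → counitR (proj g r) = 0
  /-- the antipode of `R` -/
  antipodeR : R →ₗ[k] R
  antipodeR_left : ∀ (r : R) {n : ℕ} (r1 r2 : Fin n → R), IsRepr k (comulR r) r1 r2 →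
      ∑ i, antipodeR (r1 i) * r2 i = counitR r • (1 : R)
  antipodeR_right : ∀ (r : R) {n : ℕ} (r1 r2 : Fin n → R), IsRepr k (comulR r) r1 r2 →
      ∑ i, r1 i * antipodeR (r2 i) = counitR r • (1 : R)

variable (A : Type) [Ring A] [HopfAlgebra k A]

/-- The Radford biproduct (bosonization) `A = R # kΓ` of a braided Hopf algebra `R` in
`{}^Γ_Γ\mathcal{YD}`: the Hopf algebra `A` is identified, via the `k`-linear isomorphism
`e`, with `R ⊗ kΓ`, in such a way that the multiplication, unit, comultiplication and
counit of `A` are the ones of the Radford biproduct. -/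
structure GammaBosonization extends GammaBraidedHopf k Γ R : Type where
  /-- the identification of `A` with `R ⊗ kΓ`. -/
  e : R ⊗[k] MonoidAlgebra k Γ ≃ₗ[k] A
  e_one : e (1 ⊗ₜ[k] MonoidAlgebra.single 1 1) = 1
  /-- `(r # g)(s # h) = r (g ⋅ s) # gh` -/
  e_mul : ∀ (r s : R) (g h : Γ),
    e (r ⊗ₜ[k] MonoidAlgebra.single g 1) * e (s ⊗ₜ[k] MonoidAlgebra.single h 1)
      = e ((r * act g s) ⊗ₜ[k] MonoidAlgebra.single (g * h) 1)
  e_counit : ∀ (r : R) (h : Γ),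
    Coalgebra.counit (R := k) (e (r ⊗ₜ[k] MonoidAlgebra.single h 1)) = counitR r
  /-- `Δ_A(r # h) = Σ_g (r¹ # gh) ⊗ ((r²)_g # h)` -/
  e_comul : ∀ (r : R) (h : Γ) {n : ℕ} (r1 r2 : Fin n → R), IsRepr k (comulR r) r1 r2 →
    Coalgebra.comul (R := k) (e (r ⊗ₜ[k] MonoidAlgebra.single h 1))
      = ∑ i, ∑ g : Γ, e (r1 i ⊗ₜ[k] MonoidAlgebra.single (g * h) 1)
          ⊗ₜ[k] e (proj g (r2 i) ⊗ₜ[k] MonoidAlgebra.single h 1)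

end
noncomputable section

/-- The algebra embedding `ρ : A → A^e`, `ρ(a) = a₁ ⊗ S_A(a₂)`, of a Hopf algebra into
its enveloping algebra (here given as a `k`-linear map). -/
def hopfRho (k A : Type) [Field k] [Ring A] [HopfAlgebra k A] : A →ₗ[k] A ⊗[k] Aᵐᵒᵖ :=
  (TensorProduct.map LinearMap.id
      ((MulOpposite.opLinearEquiv k).toLinearMap ∘ₗ HopfAlgebra.antipode (R := k))) ∘ₗ
    Coalgebra.comul (R := k)

end
noncomputable section

/-- The subalgebra `𝒟 ⊆ A^e` generated by the elements `(r # g) ⊗ (s # g⁻¹)`, for the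
Radford biproduct `A = R # kΓ`. -/
def DSub (k Γ R A : Type) [Field k] [Group Γ] [Fintype Γ] [DecidableEq Γ]
    [Ring R] [Algebra k R] [Ring A] [HopfAlgebra k A]
    (B : GammaBosonization k Γ R A) : Subalgebra k (A ⊗[k] Aᵐᵒᵖ) :=
  Algebra.adjoin k {x | ∃ (r s : R) (g : Γ),
    x = B.e (r ⊗ₜ[k] MonoidAlgebra.single g 1)
        ⊗ₜ[k] MulOpposite.op (B.e (s ⊗ₜ[k] MonoidAlgebra.single g⁻¹ 1))}

end

lemma exists_isRepr (k : Type) [CommRing k] {M N : Type} [AddCommGroup M] [Module k M]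
    [AddCommGroup N] [Module k N] (x : M ⊗[k] N) :
    ∃ (n : ℕ) (a : Fin n → M) (b : Fin n → N), IsRepr k x a b := by
  obtain ⟨S, hS⟩ := TensorProduct.exists_finset x
  refine ⟨S.card, fun i => (S.equivFin.symm i).1.1, fun i => (S.equivFin.symm i).1.2, ?_⟩
  rw [IsRepr, hS, ← Finset.sum_coe_sort S (fun p => p.1 ⊗ₜ[k] p.2)]
  exact (S.equivFin.symm.sum_comp (fun p => p.1.1 ⊗ₜ[k] p.1.2)).symm

open WithConv in
theorem HopfAlgebra.eq_antipode_of_id_convMul_eq_one {k C : Type} [CommSemiring k] [Semiring C]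
    [HopfAlgebra k C] {f : C →ₗ[k] C} (hf : toConv LinearMap.id * toConv f = 1) :
    f = HopfAlgebra.antipode k :=
  toConv_injective (left_inv_eq_right_inv LinearMap.antipode_mul_id hf).symm

namespace GammaBosonization

open MonoidAlgebra

variable {k Γ R A : Type} [Field k] [Group Γ] [Fintype Γ] [DecidableEq Γ]
  [Ring R] [Algebra k R] [Ring A] [HopfAlgebra k A] (B : GammaBosonization k Γ R A)

@[elab_as_elim]
theorem induction_on {motive : A → Prop} (a : A)
    (add : ∀ x y, motive x → motive y → motive (x + y))
    (smash : ∀ (r : R) (h : Γ), motive (B.e (r ⊗ₜ[k] single h 1))) : motive a := by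
  rw [← B.e.apply_symm_apply a]
  induction B.e.symm a using TensorProduct.induction_on with
  | zero => simpa using smash 0 1
  | add x y hx hy => rw [map_add]; exact add _ _ hx hy
  | tmul r f =>
    induction f using MonoidAlgebra.induction_linear with
    | zero => simpa using smash 0 1
    | add f f' hf hf' => rw [TensorProduct.tmul_add, map_add]; exact add _ _ hf hf'
    | single h c =>
      rw [← mul_one c, ← smul_eq_mul, ← smul_single, TensorProduct.tmul_smul,
        TensorProduct.smul_tmul']
      exact smash _ h

theorem linearMap_ext {M : Type} [AddCommGroup M] [Module k M] {f g : A →ₗ[k] M}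
    (hfg : ∀ (r : R) (h : Γ), f (B.e (r ⊗ₜ[k] single h 1)) = g (B.e (r ⊗ₜ[k] single h 1))) :
    f = g :=
  LinearMap.ext fun a => B.induction_on a (fun x y hx hy => by rw [map_add, map_add, hx, hy]) hfg

theorem proj_proj_self (g : Γ) (r : R) : B.proj g (B.proj g r) = B.proj g r := by
  rw [B.proj_proj, if_pos rfl]

/-- The antipode of the Radford biproduct, `S_A(r # h) = Σ_g (gh)⁻¹ ⋅ S_R(r_g) # (gh)⁻¹`. -/
noncomputable def antipodeA : A →ₗ[k] A :=
  B.e.toLinearMap ∘ₗ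
    TensorProduct.lift (((basis Γ k).constr k).toLinearMap ∘ₗ LinearMap.pi fun h => ∑ g : Γ,
      (TensorProduct.mk k R (MonoidAlgebra k Γ)).flip (single (g * h)⁻¹ 1) ∘ₗ
        (B.act (g * h)⁻¹).toLinearMap ∘ₗ B.antipodeR ∘ₗ B.proj g) ∘ₗ
    B.e.symm.toLinearMap

theorem antipodeA_apply (r : R) (h : Γ) :
    B.antipodeA (B.e (r ⊗ₜ[k] single h 1)) =
      ∑ g : Γ, B.e (B.act (g * h)⁻¹ (B.antipodeR (B.proj g r)) ⊗ₜ[k] single (g * h)⁻¹ 1) := by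
  rw [antipodeA, ← basis_apply]
  simp only [LinearMap.comp_apply, LinearEquiv.coe_coe, LinearEquiv.symm_apply_apply,
    TensorProduct.lift.tmul, Module.Basis.constr_basis, LinearMap.pi_apply,
    LinearMap.sum_apply, LinearMap.flip_apply, TensorProduct.mk_apply,
    AlgEquiv.toLinearMap_apply, map_sum]

theorem antipodeA_apply_of_proj_eq {g : Γ} {r : R} (hr : B.proj g r = r) (h : Γ) :
    B.antipodeA (B.e (r ⊗ₜ[k] single h 1)) =
      B.e (B.act (g * h)⁻¹ (B.antipodeR r) ⊗ₜ[k] single (g * h)⁻¹ 1) := by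
  rw [antipodeA_apply, Finset.sum_eq_single g]
  · rw [hr]
  · intro g' _ hg'
    rw [← hr, B.proj_proj, if_neg hg', map_zero, map_zero, TensorProduct.zero_tmul, map_zero]
  · exact fun hg => absurd (Finset.mem_univ g) hg

open WithConv in
theorem id_convMul_antipodeA : toConv LinearMap.id * toConv B.antipodeA = 1 := by
  apply WithConv.ext
  refine B.linearMap_ext fun r h => ?_
  obtain ⟨n, r1, r2, hr⟩ := exists_isRepr k (B.comulR r)
  have hterm : ∀ i g, B.e (r1 i ⊗ₜ[k] single (g * h) 1) *
      B.antipodeA (B.e (B.proj g (r2 i) ⊗ₜ[k] single h 1)) =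
        B.e ((r1 i * B.antipodeR (B.proj g (r2 i))) ⊗ₜ[k] single 1 1) := by
    intro i g
    rw [B.antipodeA_apply_of_proj_eq (B.proj_proj_self g _), B.e_mul, ← AlgEquiv.mul_apply,
      ← map_mul, mul_inv_cancel, map_one, AlgEquiv.one_apply]
  calc _ = ∑ i, ∑ g : Γ, B.e (r1 i ⊗ₜ[k] single (g * h) 1) *
        B.antipodeA (B.e (B.proj g (r2 i) ⊗ₜ[k] single h 1)) := by
        simp [LinearMap.convMul_def, B.e_comul r h r1 r2 hr]
    _ = ∑ i, B.e ((r1 i * B.antipodeR (r2 i)) ⊗ₜ[k] single 1 1) := by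
        simp_rw [hterm, ← map_sum, ← TensorProduct.sum_tmul, ← Finset.mul_sum, ← map_sum,
          B.proj_sum]
    _ = algebraMap k A (B.counitR r) := by
        rw [← map_sum, ← TensorProduct.sum_tmul, B.antipodeR_right r r1 r2 hr,
          ← TensorProduct.smul_tmul', map_smul, B.e_one, Algebra.algebraMap_eq_smul_one]
    _ = _ := by simp [LinearMap.convOne_def, B.e_counit]

theorem antipode_eq_antipodeA : HopfAlgebra.antipode k (A := A) = B.antipodeA :=
  (HopfAlgebra.eq_antipode_of_id_convMul_eq_one B.id_convMul_antipodeA).symm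

theorem antipode_apply_of_proj_eq {g : Γ} {r : R} (hr : B.proj g r = r) (h : Γ) :
    HopfAlgebra.antipode k (B.e (r ⊗ₜ[k] single h 1)) =
      B.e (B.act (g * h)⁻¹ (B.antipodeR r) ⊗ₜ[k] single (g * h)⁻¹ 1) := by
  rw [B.antipode_eq_antipodeA, B.antipodeA_apply_of_proj_eq hr]

theorem hopfRho_mem_DSub (a : A) : hopfRho k A a ∈ DSub k Γ R A B := by
  induction a using B.induction_on with
  | add x y hx hy => rw [map_add]; exact add_mem hx hy
  | smash r h =>
    obtain ⟨n, r1, r2, hr⟩ := exists_isRepr k (B.comulR r)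
    have hexp : hopfRho k A (B.e (r ⊗ₜ[k] single h 1)) =
        ∑ i, ∑ g : Γ, B.e (r1 i ⊗ₜ[k] single (g * h) 1) ⊗ₜ[k]
          MulOpposite.op (HopfAlgebra.antipode k (B.e (B.proj g (r2 i) ⊗ₜ[k] single h 1))) := by
      simp [hopfRho, B.e_comul r h r1 r2 hr]
    rw [hexp]
    refine sum_mem fun i _ => sum_mem fun g _ => Algebra.subset_adjoin
      ⟨r1 i, B.act (g * h)⁻¹ (B.antipodeR (B.proj g (r2 i))), g * h, ?_⟩
    rw [B.antipode_apply_of_proj_eq (B.proj_proj_self g _)]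

end GammaBosonization

theorem statement8_general (k Γ R A : Type) [Field k]
    [Group Γ] [Fintype Γ] [DecidableEq Γ] [Ring R] [Algebra k R]
    [Ring A] [HopfAlgebra k A] (B : GammaBosonization k Γ R A) :
    ∀ (a : A) (x : A ⊗[k] Aᵐᵒᵖ), x ∈ DSub k Γ R A B →
      hopfRho k A a * x ∈ DSub k Γ R A B ∧ x * hopfRho k A a ∈ DSub k Γ R A B :=
  fun a _ hx => ⟨mul_mem (B.hopfRho_mem_DSub a) hx, mul_mem hx (B.hopfRho_mem_DSub a)⟩

/-- **Statement 8**.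
Let `Γ` be a finite group, `R` a braided Hopf algebra in `{}^Γ_Γ\mathcal{YD}`,
`A = R # kΓ`, and `𝒟 ⊆ A^e` the subalgebra generated by the elements
`(r # g) ⊗ (s # g⁻¹)`.  Then `𝒟` is a left `A`-submodule of `L(A^e)` and a right
`A`-submodule of `R(A^e)`, the `A`-actions being through the embedding
`ρ(a) = a₁ ⊗ S_A(a₂)`. -/
theorem statement8 (k Γ R A : Type) [Field k] [CharZero k] [IsAlgClosed k]
    [Group Γ] [Fintype Γ] [DecidableEq Γ] [Ring R] [Algebra k R]
    [Ring A] [HopfAlgebra k A] (B : GammaBosonization k Γ R A) :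
    ∀ (a : A) (x : A ⊗[k] Aᵐᵒᵖ), x ∈ DSub k Γ R A B →
      hopfRho k A a * x ∈ DSub k Γ R A B ∧ x * hopfRho k A a ∈ DSub k Γ R A B :=
  statement8_general k Γ R A B
end

section
/- Let Γ be a finite group, R a braided Hopf algebra in ^Γ_Γ𝒴𝒟, A = R#kΓ, and 𝒟 ⊆ A^e the subalgebra generated by the elements (r#g)⊗(s#g⁻¹) with r,s ∈ R, g ∈ Γ. Then the map a⊗b⊗1 ↦ ab gives an isomorphism R(A^e) ⊗_A k ≅ A of left A^e-modules (where k is the trivial right A-module via the counit ε_A and R(A^e) is A^e with right A-action via ρ(a) = a₁⊗S_A(a₂)), and this isomorphism restricts to an isomorphism 𝒟 ⊗_A k ≅ R of left R^e-modules. -/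
open scoped TensorProduct
open TensorProduct

open scoped TensorProduct
open TensorProduct

/-! The multiplication map `μ : A^e → A` is `A^e`-linear and `μ ∘ ρ = ε`, so `μ` kills
`A^e ρ(ker ε)`. Conversely, if `Δ b = Σ uᵢ ⊗ vᵢ`, coassociativity and the antipode axiom give
`Σ (a ⊗ vᵢ) ρ(uᵢ) = ab ⊗ 1`, hence `a ⊗ b - ab ⊗ 1 = Σ (a ⊗ vᵢ) ρ(ε(uᵢ) - uᵢ)`: every `z` is
congruent to `μ(z) ⊗ 1` modulo `A^e ρ(ker ε)`, which pins down the kernel of `μ`.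
For `A = R # kΓ` and `a ⊗ b = (r # g) ⊗ (s # g⁻¹)`, the right legs of `Δ(s # g⁻¹)` are
`(s²)_h # g⁻¹`, so the factors `a ⊗ vᵢ` are again generators of `𝒟`; and
`μ((r # g) ⊗ (s # g⁻¹)) = r (g ⋅ s) # 1`. -/

noncomputable section

open MulOpposite

section MulEnv

variable (k A : Type) [CommSemiring k] [Semiring A] [Algebra k A]

abbrev mulEnv : A ⊗[k] Aᵐᵒᵖ →ₗ[k] A :=
  LinearMap.mul' k A ∘ₗ TensorProduct.map LinearMap.id (opLinearEquiv k).symm.toLinearMap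

variable {k A}

@[simp] lemma mulEnv_tmul (a : A) (b : Aᵐᵒᵖ) : mulEnv k A (a ⊗ₜ b) = a * b.unop := by
  simp [mulEnv]

lemma mulEnv_tmul_mul (c : A) (d : Aᵐᵒᵖ) (x : A ⊗[k] Aᵐᵒᵖ) :
    mulEnv k A ((c ⊗ₜ d) * x) = c * mulEnv k A x * d.unop := by
  induction x using TensorProduct.induction_on with
  | zero => simp
  | tmul a b => simp [Algebra.TensorProduct.tmul_mul_tmul, mul_assoc]
  | add x y hx hy => rw [mul_add, map_add, hx, hy, map_add, mul_add, add_mul]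

lemma mulEnv_surjective : Function.Surjective (mulEnv k A) :=
  fun a => ⟨a ⊗ₜ op 1, by simp⟩

variable (k A) in
def mulEnvKer : Ideal (A ⊗[k] Aᵐᵒᵖ) where
  carrier := {x | mulEnv k A x = 0}
  add_mem' {x y} hx hy := by simp_all
  zero_mem' := map_zero _
  smul_mem' x y (hy : mulEnv k A y = 0) := by
    change mulEnv k A (x * y) = 0
    induction x using TensorProduct.induction_on with
    | zero => simp
    | tmul c d => rw [mulEnv_tmul_mul, hy, mul_zero, zero_mul]
    | add x z hx hz => rw [add_mul, map_add, hx, hz, add_zero]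

lemma mem_mulEnvKer {x : A ⊗[k] Aᵐᵒᵖ} : x ∈ mulEnvKer k A ↔ mulEnv k A x = 0 :=
  Iff.rfl

end MulEnv

section KerProj

variable (k A : Type) [CommSemiring k] [Ring A] [Algebra k A]

def mulEnvKerProj : A ⊗[k] Aᵐᵒᵖ →ₗ[k] A ⊗[k] Aᵐᵒᵖ :=
  LinearMap.id - (TensorProduct.mk k A Aᵐᵒᵖ).flip (op 1) ∘ₗ mulEnv k A

variable {k A}

lemma mulEnvKerProj_tmul (a : A) (b : Aᵐᵒᵖ) :
    mulEnvKerProj k A (a ⊗ₜ b) = a ⊗ₜ b - (a * b.unop) ⊗ₜ op 1 := by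
  simp [mulEnvKerProj]

lemma mulEnvKerProj_eq_self {x : A ⊗[k] Aᵐᵒᵖ} (hx : mulEnv k A x = 0) :
    mulEnvKerProj k A x = x := by
  rw [mulEnvKerProj, LinearMap.sub_apply, LinearMap.comp_apply, hx, map_zero, sub_zero,
    LinearMap.id_apply]

end KerProj

section Rho

variable {k A : Type} [Field k] [Ring A] [HopfAlgebra k A]

lemma mulEnv_hopfRho (a : A) :
    mulEnv k A (hopfRho k A a) = algebraMap k A (Coalgebra.counit a) := by
  rw [← HopfAlgebra.mul_antipode_lTensor_comul_apply (R := k)]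
  simp only [hopfRho, mulEnv, LinearMap.comp_apply]
  induction (Coalgebra.comul (R := k) a) using TensorProduct.induction_on with
  | zero => simp
  | tmul x y => simp
  | add x y hx hy => simp only [map_add, hx, hy]

lemma hopfRho_algebraMap (c : k) : hopfRho k A (algebraMap k A c) = algebraMap k _ c := by
  simp [hopfRho, Algebra.algebraMap_eq_smul_one, Algebra.TensorProduct.one_def]

lemma mulEnv_mul_hopfRho (x : A ⊗[k] Aᵐᵒᵖ) (a : A) :
    mulEnv k A (x * hopfRho k A a) = Coalgebra.counit (R := k) a • mulEnv k A x := by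
  induction x using TensorProduct.induction_on with
  | zero => simp
  | tmul c d =>
    rw [mulEnv_tmul_mul, mulEnv_hopfRho, mulEnv_tmul, ← Algebra.commutes, ← Algebra.smul_def,
      smul_mul_assoc]
  | add x y hx hy => rw [add_mul, map_add, hx, hy, map_add, smul_add]

lemma one_tmul_mul_hopfRho (u v : A) :
    (1 ⊗ₜ op v) * hopfRho k A u
      = ((opLinearEquiv k).toLinearMap ∘ₗ LinearMap.mul' k A ∘ₗ
          (HopfAlgebra.antipode k).rTensor A).lTensor A
        (TensorProduct.assoc k A A A (Coalgebra.comul u ⊗ₜ v)) := by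
  simp only [hopfRho, LinearMap.comp_apply]
  induction (Coalgebra.comul (R := k) u) using TensorProduct.induction_on with
  | zero => simp
  | tmul x y => simp [Algebra.TensorProduct.tmul_mul_tmul]
  | add x y hx hy => simp only [map_add, mul_add, hx, hy, TensorProduct.add_tmul]

lemma sum_one_tmul_mul_hopfRho {b : A} {ι : Type} (𝓡 : Coalgebra.Repr k b ι) :
    ∑ i ∈ 𝓡.index, (1 ⊗ₜ op (𝓡.right i)) * hopfRho k A (𝓡.left i) = b ⊗ₜ op 1 := by
  simp only [one_tmul_mul_hopfRho, ← LinearMap.rTensor_tmul, ← map_sum, 𝓡.eq,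
    Coalgebra.coassoc_apply]
  rw [← LinearMap.lTensor_comp_apply, LinearMap.comp_assoc, LinearMap.comp_assoc,
    HopfAlgebra.mul_antipode_rTensor_comul, ← LinearMap.comp_assoc, LinearMap.lTensor_comp_apply,
    Coalgebra.lTensor_counit_comul]
  simp

lemma tmul_sub_mul_tmul_one_eq_sum (a b : A) {ι : Type} (𝓡 : Coalgebra.Repr k b ι) :
    a ⊗ₜ op b - (a * b) ⊗ₜ op 1
      = ∑ i ∈ 𝓡.index, (a ⊗ₜ op (𝓡.right i)) *
          hopfRho k A (algebraMap k A (Coalgebra.counit (𝓡.left i)) - 𝓡.left i) := by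
  have hcounit : ∑ i ∈ 𝓡.index, (a ⊗ₜ op (𝓡.right i)) *
      algebraMap k (A ⊗[k] Aᵐᵒᵖ) (Coalgebra.counit (𝓡.left i)) = a ⊗ₜ op b := by
    simp_rw [← Algebra.commutes, ← Algebra.smul_def, ← TensorProduct.tmul_smul, ← op_smul,
      ← TensorProduct.tmul_sum, ← Finset.op_sum, Coalgebra.sum_counit_smul]
  have hrho : ∑ i ∈ 𝓡.index, (a ⊗ₜ op (𝓡.right i)) * hopfRho k A (𝓡.left i)
      = (a * b) ⊗ₜ op 1 := by
    have h := congrArg ((a ⊗ₜ[k] (1 : Aᵐᵒᵖ)) * ·) (sum_one_tmul_mul_hopfRho 𝓡)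
    simpa only [Finset.mul_sum, ← mul_assoc, Algebra.TensorProduct.tmul_mul_tmul, mul_one,
      one_mul] using h
  simp only [map_sub, mul_sub, Finset.sum_sub_distrib, hopfRho_algebraMap, hcounit, hrho]

lemma mulEnvKerProj_mem_span_mul_hopfRho (z : A ⊗[k] Aᵐᵒᵖ) :
    mulEnvKerProj k A z ∈ Submodule.span (A ⊗[k] Aᵐᵒᵖ)
      {y | ∃ (x : A ⊗[k] Aᵐᵒᵖ) (a : A),
        Coalgebra.counit (R := k) a = 0 ∧ y = x * hopfRho k A a} := by
  suffices h : (⊤ : Submodule k (A ⊗[k] Aᵐᵒᵖ)) ≤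
      (Submodule.span (A ⊗[k] Aᵐᵒᵖ) _ |>.restrictScalars k).comap (mulEnvKerProj k A) from
    h Submodule.mem_top
  rw [← TensorProduct.span_tmul_eq_top, Submodule.span_le]
  rintro _ ⟨a, b, rfl⟩
  obtain ⟨b, rfl⟩ := op_surjective b
  rw [SetLike.mem_coe, Submodule.mem_comap, mulEnvKerProj_tmul, unop_op,
    tmul_sub_mul_tmul_one_eq_sum a b (Coalgebra.Repr.arbitrary k b)]
  refine Submodule.sum_mem _ fun i _ => Submodule.subset_span ⟨_, _, ?_, rfl⟩
  rw [map_sub, Bialgebra.counit_algebraMap, sub_self]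

lemma ker_mulEnv_eq_span_mul_hopfRho :
    (LinearMap.ker (mulEnv k A) : Set (A ⊗[k] Aᵐᵒᵖ))
      = (Submodule.span (A ⊗[k] Aᵐᵒᵖ)
          {y | ∃ (x : A ⊗[k] Aᵐᵒᵖ) (a : A),
            Coalgebra.counit (R := k) a = 0 ∧ y = x * hopfRho k A a} : Set _) := by
  ext x
  constructor
  · intro (hx : mulEnv k A x = 0)
    rw [← mulEnvKerProj_eq_self hx]
    exact mulEnvKerProj_mem_span_mul_hopfRho x
  · intro hx
    refine (Submodule.span_le (p := mulEnvKer k A)).2 ?_ hx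
    rintro _ ⟨x, a, ha, rfl⟩
    rw [SetLike.mem_coe, mem_mulEnvKer, mulEnv_mul_hopfRho, ha, zero_smul]

end Rho

namespace GammaBosonization

variable {k Γ R A : Type} [Field k] [Group Γ] [Fintype Γ] [DecidableEq Γ]
  [Ring R] [Algebra k R] [Ring A] [HopfAlgebra k A] (B : GammaBosonization k Γ R A)

def dGenerators : Set (A ⊗[k] Aᵐᵒᵖ) :=
  {x | ∃ (r s : R) (g : Γ),
    x = B.e (r ⊗ₜ[k] MonoidAlgebra.single g 1)
        ⊗ₜ[k] MulOpposite.op (B.e (s ⊗ₜ[k] MonoidAlgebra.single g⁻¹ 1))}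

def dGeneratorsSubmonoid : Submonoid (A ⊗[k] Aᵐᵒᵖ) where
  carrier := B.dGenerators
  one_mem' := ⟨1, 1, 1, by rw [inv_one, B.e_one, op_one, Algebra.TensorProduct.one_def]⟩
  mul_mem' := by
    rintro _ _ ⟨r, s, g, rfl⟩ ⟨r', s', g', rfl⟩
    refine ⟨r * B.act g r', s' * B.act g'⁻¹ s, g * g', ?_⟩
    rw [Algebra.TensorProduct.tmul_mul_tmul, ← op_mul, B.e_mul, B.e_mul, mul_inv_rev]

lemma DSub_toSubmodule :
    Subalgebra.toSubmodule (DSub k Γ R A B) = Submodule.span k B.dGenerators := by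
  rw [DSub, Algebra.adjoin_eq_span]
  congr
  exact congrArg SetLike.coe (Submonoid.closure_eq B.dGeneratorsSubmonoid)

lemma mulEnv_dGenerator (r s : R) (g : Γ) :
    mulEnv k A (B.e (r ⊗ₜ[k] MonoidAlgebra.single g 1)
        ⊗ₜ[k] op (B.e (s ⊗ₜ[k] MonoidAlgebra.single g⁻¹ 1)))
      = B.e ((r * B.act g s) ⊗ₜ[k] MonoidAlgebra.single 1 1) := by
  rw [mulEnv_tmul, unop_op, B.e_mul, mul_inv_cancel]

def comulRepr (s : R) (g : Γ) {n : ℕ} (s1 s2 : Fin n → R)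
    (hs : IsRepr k (B.comulR s) s1 s2) :
    Coalgebra.Repr k (B.e (s ⊗ₜ[k] MonoidAlgebra.single g 1)) (Fin n × Γ) where
  index := Finset.univ
  left p := B.e (s1 p.1 ⊗ₜ[k] MonoidAlgebra.single (p.2 * g) 1)
  right p := B.e (B.proj p.2 (s2 p.1) ⊗ₜ[k] MonoidAlgebra.single g 1)
  eq := by rw [B.e_comul s g s1 s2 hs, Fintype.sum_prod_type]

lemma mulEnvKerProj_dGenerator_mem (r s : R) (g : Γ) :
    mulEnvKerProj k A (B.e (r ⊗ₜ[k] MonoidAlgebra.single g 1)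
        ⊗ₜ[k] op (B.e (s ⊗ₜ[k] MonoidAlgebra.single g⁻¹ 1))) ∈ Submodule.span k
          {z | ∃ y ∈ DSub k Γ R A B, ∃ a : A,
            Coalgebra.counit (R := k) a = 0 ∧ z = y * hopfRho k A a} := by
  obtain ⟨n, s1, s2, hs⟩ := TensorProduct.exists_sum_tmul_eq (B.comulR s)
  rw [mulEnvKerProj_tmul, unop_op,
    tmul_sub_mul_tmul_one_eq_sum _ _ (B.comulRepr s g⁻¹ s1 s2 hs)]
  refine Submodule.sum_mem _ fun p _ => Submodule.subset_span
    ⟨_, Algebra.subset_adjoin ⟨r, B.proj p.2 (s2 p.1), g, rfl⟩, _, ?_, rfl⟩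
  rw [map_sub, Bialgebra.counit_algebraMap, sub_self]

lemma mulEnv_image_DSub :
    mulEnv k A '' (DSub k Γ R A B : Set (A ⊗[k] Aᵐᵒᵖ))
      = Set.range (fun r : R => B.e (r ⊗ₜ[k] MonoidAlgebra.single 1 1)) := by
  apply subset_antisymm
  · have h : Submodule.map (mulEnv k A) (Subalgebra.toSubmodule (DSub k Γ R A B))
        ≤ LinearMap.range (B.e.toLinearMap ∘ₗ
            (TensorProduct.mk k R (MonoidAlgebra k Γ)).flip (MonoidAlgebra.single 1 1)) := by
      rw [DSub_toSubmodule, Submodule.map_span, Submodule.span_le]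
      rintro _ ⟨_, ⟨r, s, g, rfl⟩, rfl⟩
      exact ⟨r * B.act g s, (B.mulEnv_dGenerator r s g).symm⟩
    exact h
  · rintro _ ⟨r, rfl⟩
    refine ⟨_, Algebra.subset_adjoin ⟨r, 1, 1, rfl⟩, ?_⟩
    rw [mulEnv_dGenerator, map_one, mul_one]

lemma mulEnv_eq_zero_iff_mem_span_DSub_mul_hopfRho {x : A ⊗[k] Aᵐᵒᵖ}
    (hx : x ∈ DSub k Γ R A B) :
    mulEnv k A x = 0 ↔ x ∈ Submodule.span k
      {z | ∃ y ∈ DSub k Γ R A B, ∃ a : A,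
        Coalgebra.counit (R := k) a = 0 ∧ z = y * hopfRho k A a} := by
  constructor
  · intro h
    rw [← mulEnvKerProj_eq_self h]
    have hle : Submodule.span k B.dGenerators ≤ (Submodule.span k _).comap (mulEnvKerProj k A) :=
      Submodule.span_le.2 fun _ ⟨r, s, g, hgen⟩ => hgen ▸ B.mulEnvKerProj_dGenerator_mem r s g
    exact hle (B.DSub_toSubmodule ▸ hx)
  · intro h
    refine (Submodule.span_le (p := LinearMap.ker (mulEnv k A))).2 ?_ h
    rintro _ ⟨y, -, a, ha, rfl⟩
    rw [SetLike.mem_coe, LinearMap.mem_ker, mulEnv_mul_hopfRho, ha, zero_smul]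

end GammaBosonization

end

open scoped TensorProduct in
theorem statement10_general (k Γ R A : Type) [Field k]
    [Group Γ] [Fintype Γ] [DecidableEq Γ] [Ring R] [Algebra k R]
    [Ring A] [HopfAlgebra k A] (B : GammaBosonization k Γ R A) :
    -- `μ` is a morphism of left `A^e`-modules:
    (∀ (c d : A) (x : A ⊗[k] Aᵐᵒᵖ),
        ((LinearMap.mul' k A) ∘ₗ
            (TensorProduct.map LinearMap.id (MulOpposite.opLinearEquiv k).symm.toLinearMap))
          ((c ⊗ₜ[k] MulOpposite.op d) * x)
        = c * (((LinearMap.mul' k A) ∘ₗ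
            (TensorProduct.map LinearMap.id (MulOpposite.opLinearEquiv k).symm.toLinearMap))
            x) * d) ∧
    -- `μ` is surjective:
    Function.Surjective
      ((LinearMap.mul' k A) ∘ₗ
        (TensorProduct.map LinearMap.id (MulOpposite.opLinearEquiv k).symm.toLinearMap)) ∧
    -- the kernel of `μ` is `A^e ⋅ ρ(ker ε_A)`, i.e. `μ` induces `R(A^e) ⊗_A k ≅ A`:
    (LinearMap.ker ((LinearMap.mul' k A) ∘ₗ
        (TensorProduct.map LinearMap.id (MulOpposite.opLinearEquiv k).symm.toLinearMap))
        : Set (A ⊗[k] Aᵐᵒᵖ))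
      = (Submodule.span (A ⊗[k] Aᵐᵒᵖ)
          {y | ∃ (x : A ⊗[k] Aᵐᵒᵖ) (a : A),
            Coalgebra.counit (R := k) a = 0 ∧ y = x * hopfRho k A a} : Set _) ∧
    -- `μ` maps `𝒟` onto `R = R # 1 ⊆ A`:
    (((LinearMap.mul' k A) ∘ₗ
        (TensorProduct.map LinearMap.id (MulOpposite.opLinearEquiv k).symm.toLinearMap)) ''
          (DSub k Γ R A B : Set (A ⊗[k] Aᵐᵒᵖ))
      = Set.range (fun r : R => B.e (r ⊗ₜ[k] MonoidAlgebra.single 1 1))) ∧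
    -- and the kernel of `μ` on `𝒟` is spanned by `𝒟 ⋅ ρ(ker ε_A)`, i.e. the isomorphism
    -- restricts to `𝒟 ⊗_A k ≅ R`:
    ∀ x ∈ DSub k Γ R A B,
      (((LinearMap.mul' k A) ∘ₗ
          (TensorProduct.map LinearMap.id (MulOpposite.opLinearEquiv k).symm.toLinearMap)) x
        = 0
      ↔ x ∈ Submodule.span k
          {z | ∃ y ∈ DSub k Γ R A B, ∃ a : A,
            Coalgebra.counit (R := k) a = 0 ∧ z = y * hopfRho k A a}) :=
  ⟨fun c d x => mulEnv_tmul_mul c (MulOpposite.op d) x, mulEnv_surjective,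
    ker_mulEnv_eq_span_mul_hopfRho, B.mulEnv_image_DSub,
    fun _ => B.mulEnv_eq_zero_iff_mem_span_DSub_mul_hopfRho⟩

open scoped TensorProduct in
/-- **Statement 10** (Lemma `lem d`(b)).
For `A = R # kΓ`, the multiplication map `μ : A^e → A`, `a ⊗ b ↦ ab`, induces an
isomorphism `R(A^e) ⊗_A k ≅ A` of left `A^e`-modules (where the right `A`-action on
`A^e` is via `ρ(a) = a₁ ⊗ S_A(a₂)` and `k` is the trivial module):  `μ` is `A^e`-linear,
surjective, and its kernel is `A^e ⋅ ρ(ker ε_A)`.  Moreover this isomorphism restricts to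
an isomorphism `𝒟 ⊗_A k ≅ R`: `μ` maps `𝒟` onto `R # 1 ⊆ A` and its kernel on `𝒟` is
spanned by `𝒟 ⋅ ρ(ker ε_A)`. -/
theorem statement10 (k Γ R A : Type) [Field k] [CharZero k] [IsAlgClosed k]
    [Group Γ] [Fintype Γ] [DecidableEq Γ] [Ring R] [Algebra k R]
    [Ring A] [HopfAlgebra k A] (B : GammaBosonization k Γ R A) :
    -- `μ` is a morphism of left `A^e`-modules:
    (∀ (c d : A) (x : A ⊗[k] Aᵐᵒᵖ),
        ((LinearMap.mul' k A) ∘ₗ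
            (TensorProduct.map LinearMap.id (MulOpposite.opLinearEquiv k).symm.toLinearMap))
          ((c ⊗ₜ[k] MulOpposite.op d) * x)
        = c * (((LinearMap.mul' k A) ∘ₗ
            (TensorProduct.map LinearMap.id (MulOpposite.opLinearEquiv k).symm.toLinearMap))
            x) * d) ∧
    -- `μ` is surjective:
    Function.Surjective
      ((LinearMap.mul' k A) ∘ₗ
        (TensorProduct.map LinearMap.id (MulOpposite.opLinearEquiv k).symm.toLinearMap)) ∧
    -- the kernel of `μ` is `A^e ⋅ ρ(ker ε_A)`, i.e. `μ` induces `R(A^e) ⊗_A k ≅ A`: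
    (LinearMap.ker ((LinearMap.mul' k A) ∘ₗ
        (TensorProduct.map LinearMap.id (MulOpposite.opLinearEquiv k).symm.toLinearMap))
        : Set (A ⊗[k] Aᵐᵒᵖ))
      = (Submodule.span (A ⊗[k] Aᵐᵒᵖ)
          {y | ∃ (x : A ⊗[k] Aᵐᵒᵖ) (a : A),
            Coalgebra.counit (R := k) a = 0 ∧ y = x * hopfRho k A a} : Set _) ∧
    -- `μ` maps `𝒟` onto `R = R # 1 ⊆ A`:
    (((LinearMap.mul' k A) ∘ₗ
        (TensorProduct.map LinearMap.id (MulOpposite.opLinearEquiv k).symm.toLinearMap)) ''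
          (DSub k Γ R A B : Set (A ⊗[k] Aᵐᵒᵖ))
      = Set.range (fun r : R => B.e (r ⊗ₜ[k] MonoidAlgebra.single 1 1))) ∧
    -- and the kernel of `μ` on `𝒟` is spanned by `𝒟 ⋅ ρ(ker ε_A)`, i.e. the isomorphism
    -- restricts to `𝒟 ⊗_A k ≅ R`:
    ∀ x ∈ DSub k Γ R A B,
      (((LinearMap.mul' k A) ∘ₗ
          (TensorProduct.map LinearMap.id (MulOpposite.opLinearEquiv k).symm.toLinearMap)) x
        = 0
      ↔ x ∈ Submodule.span k
          {z | ∃ y ∈ DSub k Γ R A B, ∃ a : A,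
            Coalgebra.counit (R := k) a = 0 ∧ z = y * hopfRho k A a}) :=
  statement10_general k Γ R A B
end
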